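/- (Gallagher's lemma) If 0 < W < V - 2 and g : [W, V] → ℂ is continuously differentiable, then ∑_{W+1 ≤ n ≤ V-1} |g(n)|² ≪ ∫_W^V |g(t)|² dt + ( ∫_W^V |g(t)|² dt · ∫_W^V |g'(t)|² dt )^{1/2}, where the sum is over integers n in [W+1, V-1] and the implied constant is absolute. -/

import Mathlib

/-!
For an integer `n` with `[n, n + 1] ⊆ [W, V]`, the fundamental theorem of calculus applied to
`|g|²`, whose derivative is bounded by `2|g||g'|`, gives `|g(n)|² ≤ |g(t)|² + ∫_n^{n+1} 2|g||g'|`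
for every `t ∈ [n, n + 1]`; averaging over `t`,
`|g(n)|² ≤ ∫_n^{n+1} (|g|² + 2|g||g'|)`. The intervals `(n, n + 1]` are disjoint, so the sum is at
most `∫_W^V |g|² + 2 ∫_W^V |g||g'|`, and Cauchy–Schwarz bounds the last integral; so `C = 2`.
-/

open MeasureTheory Set intervalIntegral
open scoped RealInnerProductSpace

namespace Gallagher

theorem abs_sub_le_integral_abs_deriv {F F' : ℝ → ℝ} {a b x y : ℝ}
    (hx : x ∈ Icc a b) (hy : y ∈ Icc a b) (hF : ContinuousOn F (Icc a b))
    (hderiv : ∀ t ∈ Ioo a b, HasDerivAt F (F' t) t) (hF' : IntervalIntegrable F' volume a b) :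
    |F x - F y| ≤ ∫ t in a..b, |F' t| := by
  wlog hyx : y ≤ x generalizing x y
  · rw [abs_sub_comm]
    exact this hy hx (le_of_not_ge hyx)
  have hab : a ≤ b := hx.1.trans hx.2
  have hftc : ∫ t in y..x, F' t = F x - F y :=
    integral_eq_sub_of_hasDerivAt_of_le hyx (hF.mono (Icc_subset_Icc hy.1 hx.2))
      (fun t ht => hderiv t (Ioo_subset_Ioo hy.1 hx.2 ht))
      (hF'.mono_set (by rw [uIcc_of_le hyx, uIcc_of_le hab]; exact Icc_subset_Icc hy.1 hx.2))
  calc |F x - F y| = |∫ t in y..x, F' t| := by rw [hftc]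
    _ ≤ ∫ t in y..x, |F' t| := abs_integral_le_integral_abs hyx
    _ ≤ ∫ t in a..b, |F' t| :=
      integral_mono_interval hy.1 hyx hx.2 (.of_forall fun t => abs_nonneg _) hF'.abs

theorem mul_le_integral_add_mul_integral_abs_deriv {F F' : ℝ → ℝ} {a b x : ℝ}
    (hx : x ∈ Icc a b) (hF : ContinuousOn F (Icc a b))
    (hderiv : ∀ t ∈ Ioo a b, HasDerivAt F (F' t) t) (hF' : IntervalIntegrable F' volume a b) :
    (b - a) * F x ≤ (∫ t in a..b, F t) + (b - a) * ∫ t in a..b, |F' t| := by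
  have hab : a ≤ b := hx.1.trans hx.2
  have hpointwise : ∀ t ∈ Icc a b, F x - ∫ s in a..b, |F' s| ≤ F t := fun t ht => by
    linarith [le_abs_self (F x - F t), abs_sub_le_integral_abs_deriv hx ht hF hderiv hF']
  have h := integral_mono_on hab (intervalIntegrable_const (μ := volume))
    (hF.intervalIntegrable_of_Icc hab) hpointwise
  rw [intervalIntegral.integral_const, smul_eq_mul] at h
  linarith

theorem memLp_two_of_continuousOn_Icc {E : Type*} [NormedAddCommGroup E] {u : ℝ → E} {a b : ℝ}
    (hu : ContinuousOn u (Icc a b)) :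
    MemLp u 2 (volume.restrict (Ioc a b)) := by
  have hu' : ContinuousOn u (Ioc a b) := hu.mono Ioc_subset_Icc_self
  refine (memLp_two_iff_integrable_sq_norm (hu'.aestronglyMeasurable measurableSet_Ioc)).2 ?_
  exact ((hu.norm.pow 2).integrableOn_Icc).mono_set Ioc_subset_Icc_self

theorem integral_norm_mul_norm_le_sqrt {E : Type*} [NormedAddCommGroup E] {u v : ℝ → E} {a b : ℝ}
    (hab : a ≤ b) (hu : ContinuousOn u (Icc a b)) (hv : ContinuousOn v (Icc a b)) :
    ∫ t in a..b, ‖u t‖ * ‖v t‖ ≤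
      √((∫ t in a..b, ‖u t‖ ^ 2) * ∫ t in a..b, ‖v t‖ ^ 2) := by
  have h := integral_mul_norm_le_Lp_mul_Lq Real.HolderConjugate.two_two
    (by simpa using memLp_two_of_continuousOn_Icc hu)
    (by simpa using memLp_two_of_continuousOn_Icc hv)
  simp only [Real.rpow_two, ← Real.sqrt_eq_rpow] at h
  rw [integral_of_le hab, integral_of_le hab, integral_of_le hab,
    Real.sqrt_mul (setIntegral_nonneg measurableSet_Ioc fun t _ => by positivity)]
  exact h

variable {E : Type*} [NormedAddCommGroup E] [InnerProductSpace ℝ E]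

theorem mul_sq_norm_le_integral {f f' : ℝ → E} {a b x : ℝ} (hx : x ∈ Icc a b)
    (hf : ContinuousOn f (Icc a b)) (hf' : ContinuousOn f' (Icc a b))
    (hderiv : ∀ t ∈ Ioo a b, HasDerivAt f (f' t) t) :
    (b - a) * ‖f x‖ ^ 2 ≤
      (∫ t in a..b, ‖f t‖ ^ 2) + (b - a) * ∫ t in a..b, 2 * (‖f t‖ * ‖f' t‖) := by
  have hab : a ≤ b := hx.1.trans hx.2
  have hinner : ContinuousOn (fun t => 2 * ⟪f t, f' t⟫) (Icc a b) :=
    continuousOn_const.mul (hf.inner hf')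
  have h := mul_le_integral_add_mul_integral_abs_deriv (F := fun t => ‖f t‖ ^ 2) hx
    (hf.norm.pow 2) (fun t ht => (hderiv t ht).norm_sq) (hinner.intervalIntegrable_of_Icc hab)
  have hmono : ∫ t in a..b, |2 * ⟪f t, f' t⟫| ≤ ∫ t in a..b, 2 * (‖f t‖ * ‖f' t‖) :=
    integral_mono_on hab (hinner.abs.intervalIntegrable_of_Icc hab)
      ((continuousOn_const.mul (hf.norm.mul hf'.norm)).intervalIntegrable_of_Icc hab)
      fun t _ => by
        rw [abs_mul, abs_two]
        gcongr
        exact abs_real_inner_le_norm _ _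
  calc (b - a) * ‖f x‖ ^ 2 ≤ _ := h
    _ ≤ _ := by gcongr

theorem sum_integral_Icc_intCast_le {φ : ℝ → ℝ} {a b : ℝ} (hab : a ≤ b) (hφ : ∀ t, 0 ≤ φ t)
    (hint : IntervalIntegrable φ volume a b) (s : Finset ℤ)
    (hs : ∀ n ∈ s, a ≤ n ∧ (n : ℝ) + 1 ≤ b) :
    ∑ n ∈ s, ∫ t in (n : ℝ)..n + 1, φ t ≤ ∫ t in a..b, φ t := by
  have hsub : ∀ n ∈ s, Ioc (n : ℝ) (n + 1) ⊆ Ioc a b := fun n hn =>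
    Ioc_subset_Ioc (hs n hn).1 (hs n hn).2
  have hintOn : IntegrableOn φ (Ioc a b) :=
    (intervalIntegrable_iff_integrableOn_Ioc_of_le hab).1 hint
  calc ∑ n ∈ s, ∫ t in (n : ℝ)..n + 1, φ t = ∑ n ∈ s, ∫ t in Ioc (n : ℝ) (n + 1), φ t :=
        Finset.sum_congr rfl fun n _ => integral_of_le (by linarith)
    _ = ∫ t in ⋃ n ∈ s, Ioc (n : ℝ) (n + 1), φ t :=
        (integral_biUnion_finset s (fun _ _ => measurableSet_Ioc)
          ((pairwise_disjoint_Ioc_intCast (α := ℝ)).set_pairwise _)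
          fun n hn => hintOn.mono_set (hsub n hn)).symm
    _ ≤ ∫ t in Ioc a b, φ t :=
        setIntegral_mono_set hintOn (.of_forall hφ) (.of_forall (iUnion₂_subset hsub))
    _ = ∫ t in a..b, φ t := (integral_of_le hab).symm

theorem sum_sq_norm_intCast_le {f f' : ℝ → E} {a b : ℝ} (hab : a ≤ b)
    (hf : ContinuousOn f (Icc a b)) (hf' : ContinuousOn f' (Icc a b))
    (hderiv : ∀ t ∈ Ioo a b, HasDerivAt f (f' t) t) (s : Finset ℤ)
    (hs : ∀ n ∈ s, a ≤ n ∧ (n : ℝ) + 1 ≤ b) :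
    ∑ n ∈ s, ‖f n‖ ^ 2 ≤ (∫ t in a..b, ‖f t‖ ^ 2) +
      2 * √((∫ t in a..b, ‖f t‖ ^ 2) * ∫ t in a..b, ‖f' t‖ ^ 2) := by
  have hsq : ContinuousOn (fun t => ‖f t‖ ^ 2) (Icc a b) := hf.norm.pow 2
  have hprod : ContinuousOn (fun t => 2 * (‖f t‖ * ‖f' t‖)) (Icc a b) :=
    continuousOn_const.mul (hf.norm.mul hf'.norm)
  calc ∑ n ∈ s, ‖f n‖ ^ 2
      ≤ ∑ n ∈ s, ∫ t in (n : ℝ)..n + 1, (‖f t‖ ^ 2 + 2 * (‖f t‖ * ‖f' t‖)) := by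
        refine Finset.sum_le_sum fun n hn => ?_
        have hsub : Icc (n : ℝ) (n + 1) ⊆ Icc a b := Icc_subset_Icc (hs n hn).1 (hs n hn).2
        have h := mul_sq_norm_le_integral (left_mem_Icc.2 (by linarith)) (hf.mono hsub)
          (hf'.mono hsub) fun t ht => hderiv t (Ioo_subset_Ioo (hs n hn).1 (hs n hn).2 ht)
        rw [add_sub_cancel_left, one_mul, one_mul] at h
        rwa [integral_add ((hsq.mono hsub).intervalIntegrable_of_Icc (by linarith))
          ((hprod.mono hsub).intervalIntegrable_of_Icc (by linarith))]
    _ ≤ ∫ t in a..b, (‖f t‖ ^ 2 + 2 * (‖f t‖ * ‖f' t‖)) :=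
        sum_integral_Icc_intCast_le (φ := fun t => ‖f t‖ ^ 2 + 2 * (‖f t‖ * ‖f' t‖)) hab
          (fun t => by positivity)
          ((hsq.add hprod).intervalIntegrable_of_Icc hab) s hs
    _ = (∫ t in a..b, ‖f t‖ ^ 2) + 2 * ∫ t in a..b, ‖f t‖ * ‖f' t‖ := by
        rw [integral_add (hsq.intervalIntegrable_of_Icc hab)
          (hprod.intervalIntegrable_of_Icc hab), intervalIntegral.integral_const_mul]
    _ ≤ _ := by gcongr; exact integral_norm_mul_norm_le_sqrt hab hf hf'

end Gallagher

open Gallagher in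
/-- Gallagher's lemma: if `0 < W < V - 2` and `g : [W, V] → ℂ` is continuously
differentiable, then
`∑_{W+1 ≤ n ≤ V-1} |g(n)|² ≪ ∫_W^V |g|² + (∫_W^V |g|² · ∫_W^V |g'|²)^{1/2}`,
with an absolute implied constant. -/
theorem gallagher_lemma :
    ∃ C : ℝ, 0 < C ∧ ∀ (W V : ℝ) (g : ℝ → ℂ),
      0 < W → W < V - 2 →
      ContDiffOn ℝ 1 g (Set.Icc W V) →
      ∑ n ∈ Finset.Icc ⌈W + 1⌉ ⌊V - 1⌋, ‖g n‖ ^ 2 ≤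
        C * ((∫ t in W..V, ‖g t‖ ^ 2) +
          Real.sqrt ((∫ t in W..V, ‖g t‖ ^ 2) *
            (∫ t in W..V, ‖deriv g t‖ ^ 2))) := by
  refine ⟨2, two_pos, fun W V g _ hWV hg => ?_⟩
  have hlt : W < V := by linarith
  have hderiv_eq : ∀ t ∈ Ioo W V, derivWithin g (Icc W V) t = deriv g t := fun t ht =>
    derivWithin_of_mem_nhds (Icc_mem_nhds ht.1 ht.2)
  have hderiv : ∀ t ∈ Ioo W V, HasDerivAt g (derivWithin g (Icc W V) t) t := fun t ht => by
    rw [hderiv_eq t ht]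
    exact ((hg.differentiableOn one_ne_zero t (Ioo_subset_Icc_self ht)).differentiableAt
      (Icc_mem_nhds ht.1 ht.2)).hasDerivAt
  -- `deriv g` and `derivWithin g (Icc W V)` may differ at the endpoints only
  have hintegral_eq : ∫ t in W..V, ‖derivWithin g (Icc W V) t‖ ^ 2 =
      ∫ t in W..V, ‖deriv g t‖ ^ 2 := by
    rw [integral_of_le hlt.le, integral_of_le hlt.le, integral_Ioc_eq_integral_Ioo,
      integral_Ioc_eq_integral_Ioo]
    exact setIntegral_congr_fun measurableSet_Ioo fun t ht => by rw [hderiv_eq t ht]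
  have hs : ∀ n ∈ Finset.Icc ⌈W + 1⌉ ⌊V - 1⌋, W ≤ n ∧ (n : ℝ) + 1 ≤ V := fun n hn => by
    obtain ⟨hlo, hhi⟩ := Finset.mem_Icc.1 hn
    exact ⟨by linarith [Int.ceil_le.1 hlo], by linarith [Int.le_floor.1 hhi]⟩
  have h := sum_sq_norm_intCast_le hlt.le hg.continuousOn
    (hg.continuousOn_derivWithin (uniqueDiffOn_Icc hlt) le_rfl) hderiv _ hs
  rw [hintegral_eq] at h
  have hnonneg : 0 ≤ ∫ t in W..V, ‖g t‖ ^ 2 := integral_nonneg hlt.le fun t _ => by positivity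
  linarith
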